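/- Let n ≥ 1 and let f be an admissible functional on triples of permutations of {1,…,n}. Then for every permutation π of {1,…,n}, f(π, id, π̄) = 1, where π̄ = w₀∘π is the complement of π. -/

import Mathlib

/- Background definitions: descent-cycling for Schubert problems on S_n,
   with permutations modeled as `Equiv.Perm (Fin n)` (0-indexed positions:
   position i here corresponds to position i+1 in 1-indexed notation). -/

namespace DC

/-- A triple of permutations of {1,…,n}. -/
abbrev Triple (n : ℕ) := Equiv.Perm (Fin n) × Equiv.Perm (Fin n) × Equiv.Perm (Fin n)

/-- The length ℓ(π) = number of inversions of π. -/
def len {n : ℕ} (π : Equiv.Perm (Fin n)) : ℕ :=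
  (Finset.univ.filter (fun p : Fin n × Fin n => p.1 < p.2 ∧ π p.2 < π p.1)).card

/-- π has a descent at (0-indexed) position i, i.e. π(i) > π(i+1). -/
def Descent {n : ℕ} (π : Equiv.Perm (Fin n)) (i : ℕ) : Prop :=
  ∃ h : i + 1 < n, π ⟨i + 1, h⟩ < π ⟨i, Nat.lt_of_succ_lt h⟩

/-- π has an ascent at (0-indexed) position i, i.e. π(i) < π(i+1). -/
def Ascent {n : ℕ} (π : Equiv.Perm (Fin n)) (i : ℕ) : Prop :=
  ∃ h : i + 1 < n, π ⟨i, Nat.lt_of_succ_lt h⟩ < π ⟨i + 1, h⟩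

/-- The adjacent transposition s_i swapping (0-indexed) i and i+1. -/
def s (n i : ℕ) : Equiv.Perm (Fin n) :=
  if h : i + 1 < n then Equiv.swap ⟨i, Nat.lt_of_succ_lt h⟩ ⟨i + 1, h⟩ else 1

/-- The longest permutation w₀ : m ↦ n+1−m (0-indexed: m ↦ n−1−m). -/
def w0 (n : ℕ) : Equiv.Perm (Fin n) := Fin.revPerm

/-- The complement π̄ = w₀ ∘ π of a permutation. -/
def compl {n : ℕ} (π : Equiv.Perm (Fin n)) : Equiv.Perm (Fin n) := w0 n * π

/-- A Schubert problem: a triple of permutations whose lengths sum to n(n−1)/2. -/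
def IsSchubert {n : ℕ} (P : Triple n) : Prop :=
  len P.1 + len P.2.1 + len P.2.2 = n.choose 2

/-- A Schubert problem is dc-trivial if at some position all three permutations ascend. -/
def DCTrivial {n : ℕ} (P : Triple n) : Prop :=
  IsSchubert P ∧ ∃ i : ℕ, Ascent P.1 i ∧ Ascent P.2.1 i ∧ Ascent P.2.2 i

/-- The three Schubert problems obtainable from (u,v,w) by adding a descent at i. -/
def MoveSet {n : ℕ} (u v w : Equiv.Perm (Fin n)) (i : ℕ) : Set (Triple n) :=
  {(u * s n i, v, w), (u, v * s n i, w), (u, v, w * s n i)}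

/-- P and P′ are joined by a single descent-cycling move. -/
def DCMove {n : ℕ} (P P' : Triple n) : Prop :=
  ∃ (u v w : Equiv.Perm (Fin n)) (i : ℕ),
    len u + len v + len w + 1 = n.choose 2 ∧
    Ascent u i ∧ Ascent v i ∧ Ascent w i ∧
    P ∈ MoveSet u v w i ∧ P' ∈ MoveSet u v w i

/-- dc-equivalence: the reflexive–transitive closure of descent-cycling moves. -/
def DCEquiv {n : ℕ} : Triple n → Triple n → Prop := Relation.ReflTransGen DCMove

/-- An admissible functional on triples of permutations: constant on dc-equivalence
classes of Schubert problems, zero on dc-trivial Schubert problems, one on (id,id,w₀). -/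
def Admissible {n : ℕ} (f : Triple n → ℤ) : Prop :=
  (∀ P P' : Triple n, IsSchubert P → IsSchubert P' → DCEquiv P P' → f P = f P') ∧
  (∀ P : Triple n, DCTrivial P → f P = 0) ∧
  f (1, 1, w0 n) = 1

-- lemmas
open Finset
variable {n : ℕ}

lemma len_one : len (1 : Equiv.Perm (Fin n)) = 0 := by
  rw [len, Finset.card_eq_zero, Finset.filter_eq_empty_iff]
  rintro p - ⟨h1, h2⟩
  simp at h2
  exact absurd h1 (not_lt.2 h2.le)

lemma card_lt_pairs : ((Finset.univ : Finset (Fin n × Fin n)).filter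
    (fun p => p.1 < p.2)).card = n.choose 2 := by
  have hbij : ((Finset.univ : Finset (Fin n × Fin n)).filter (fun p => p.1 < p.2)).card
      = ((Finset.univ : Finset (Fin n × Fin n)).filter (fun p => p.2 < p.1)).card := by
    apply Finset.card_bij (fun p _ => (p.2, p.1))
    · intro p hp; simp at hp ⊢; exact hp
    · intro p hp q hq h
      simp at h
      exact Prod.ext h.2 h.1
    · intro q hq; simp at hq; exact ⟨(q.2, q.1), by simp [hq], rfl⟩
  have hunion : ((Finset.univ : Finset (Fin n × Fin n)).filter (fun p => p.1 < p.2)) ∪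
      ((Finset.univ : Finset (Fin n × Fin n)).filter (fun p => p.2 < p.1))
      = (Finset.univ : Finset (Fin n)).offDiag := by
    ext p
    simp only [Finset.mem_union, Finset.mem_filter, Finset.mem_univ, true_and,
      Finset.mem_offDiag]
    refine ⟨fun h => ?_, fun h => lt_or_gt_of_ne h⟩
    rcases h with h | h
    exacts [h.ne, h.ne']
  have hdisj : Disjoint ((Finset.univ : Finset (Fin n × Fin n)).filter (fun p => p.1 < p.2))
      ((Finset.univ : Finset (Fin n × Fin n)).filter (fun p => p.2 < p.1)) := by
    rw [Finset.disjoint_left]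
    intro p h1 h2
    simp only [Finset.mem_filter] at h1 h2
    exact absurd h2.2 (not_lt.2 h1.2.le)
  have hcard := Finset.card_union_of_disjoint hdisj
  rw [hunion, Finset.offDiag_card, Finset.card_univ, Fintype.card_fin] at hcard
  have hmul : n * (n - 1) = n * n - n := by
    cases n with
    | zero => rfl
    | succ m => rw [Nat.succ_sub_one]; ring_nf; omega
  rw [Nat.choose_two_right]
  omega

lemma len_add_len_compl (π : Equiv.Perm (Fin n)) :
    len π + len (compl π) = n.choose 2 := by
  have hcompl : ∀ x : Fin n, compl π x = Fin.rev (π x) := fun x => rfl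
  have heq : (Finset.univ.filter (fun p : Fin n × Fin n => p.1 < p.2 ∧ compl π p.2 < compl π p.1))
      = Finset.univ.filter (fun p : Fin n × Fin n => p.1 < p.2 ∧ π p.1 < π p.2) := by
    ext p
    simp only [Finset.mem_filter, Finset.mem_univ, true_and, hcompl, Fin.rev_lt_rev]
  rw [len, len, heq]
  have hd : Disjoint
      (Finset.univ.filter (fun p : Fin n × Fin n => p.1 < p.2 ∧ π p.2 < π p.1))
      (Finset.univ.filter (fun p : Fin n × Fin n => p.1 < p.2 ∧ π p.1 < π p.2)) := by
    rw [Finset.disjoint_left]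
    intro p h1 h2
    simp only [Finset.mem_filter] at h1 h2
    exact absurd h2.2.2 (not_lt.2 h1.2.2.le)
  rw [← Finset.card_union_of_disjoint hd, ← card_lt_pairs (n := n)]
  congr 1
  ext p
  simp only [Finset.mem_union, Finset.mem_filter, Finset.mem_univ, true_and]
  constructor
  · rintro (h | h); exacts [h.1, h.1]
  · intro h
    rcases lt_or_gt_of_ne (fun e : π p.1 = π p.2 => h.ne (π.injective e)) with h2 | h2
    exacts [Or.inr ⟨h, h2⟩, Or.inl ⟨h, h2⟩]

lemma len_le (π : Equiv.Perm (Fin n)) : len π ≤ n.choose 2 := by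
  have := len_add_len_compl π; omega

lemma compl_one : compl (1 : Equiv.Perm (Fin n)) = w0 n := mul_one _

lemma len_w0 : len (w0 n) = n.choose 2 := by
  have := len_add_len_compl (1 : Equiv.Perm (Fin n))
  rwa [compl_one, len_one, zero_add] at this

lemma eq_one_of_strictMono {π : Equiv.Perm (Fin n)} (hmono : StrictMono π) : π = 1 := by
  have inst : WellFoundedLT (Fin n) := inferInstance
  have : (π : Fin n → Fin n) = (id : Fin n → Fin n) := by
    refine (@StrictMono.range_inj (Fin n) (Fin n) _ _ inst _ id hmono strictMono_id).1 ?_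
    rw [Set.range_id]
    exact Set.range_eq_univ.2 π.surjective
  exact Equiv.ext fun x => congrFun this x

lemma eq_one_of_len_eq_zero {π : Equiv.Perm (Fin n)} (h : len π = 0) : π = 1 := by
  have hmono : StrictMono π := by
    intro a b hab
    rcases lt_or_gt_of_ne (fun e : π a = π b => hab.ne (π.injective e)) with h2 | h2
    · exact h2
    · exfalso
      rw [len, Finset.card_eq_zero, Finset.filter_eq_empty_iff] at h
      exact h (Finset.mem_univ (a, b)) ⟨hab, h2⟩
  exact eq_one_of_strictMono hmono

lemma exists_descent {π : Equiv.Perm (Fin n)} (h : π ≠ 1) : ∃ i, Descent π i := by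
  by_contra hc
  push_neg at hc
  apply h
  have hadj : ∀ (i : ℕ) (hi : i + 1 < n),
      π ⟨i, Nat.lt_of_succ_lt hi⟩ < π ⟨i + 1, hi⟩ := by
    intro i hi
    have hne : π ⟨i, Nat.lt_of_succ_lt hi⟩ ≠ π ⟨i + 1, hi⟩ := by
      intro e
      have := π.injective e
      simp [Fin.ext_iff] at this
    rcases lt_or_gt_of_ne hne with h2 | h2
    · exact h2
    · exact absurd ⟨hi, h2⟩ (hc i)
  apply eq_one_of_strictMono
  cases n with
  | zero => exact fun a => absurd a.isLt (Nat.not_lt_zero _)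
  | succ m =>
    rw [Fin.strictMono_iff_lt_succ]
    intro i
    have := hadj i.val (Nat.succ_lt_succ i.isLt)
    convert this using 2 <;> rfl


lemma swap_lt {i : ℕ} (h : i + 1 < n) {x y : Fin n} (hxy : x < y)
    (hne : ¬(x = (⟨i, Nat.lt_of_succ_lt h⟩ : Fin n) ∧ y = (⟨i + 1, h⟩ : Fin n))) :
    Equiv.swap (⟨i, Nat.lt_of_succ_lt h⟩ : Fin n) ⟨i + 1, h⟩ x
      < Equiv.swap (⟨i, Nat.lt_of_succ_lt h⟩ : Fin n) ⟨i + 1, h⟩ y := by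
  have hval : ∀ z : Fin n,
      ((Equiv.swap (⟨i, Nat.lt_of_succ_lt h⟩ : Fin n) ⟨i + 1, h⟩) z).val =
        if z.val = i then i + 1 else if z.val = i + 1 then i else z.val := by
    intro z
    rw [Equiv.swap_apply_def]
    split_ifs with h1 h2 h3 h4 h5 <;> simp_all [Fin.ext_iff]
  have hne' : ¬(x.val = i ∧ y.val = i + 1) := by
    intro e
    exact hne ⟨Fin.ext e.1, Fin.ext e.2⟩
  rw [Fin.lt_def] at hxy ⊢
  rw [hval x, hval y]
  split_ifs <;> omega

lemma s_apply_of_lt {i : ℕ} (h : i + 1 < n) :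
    s n i = Equiv.swap (⟨i, Nat.lt_of_succ_lt h⟩ : Fin n) ⟨i + 1, h⟩ := by
  rw [s, dif_pos h]

lemma len_mul_s_of_descent {π : Equiv.Perm (Fin n)} {i : ℕ} (hd : Descent π i) :
    len (π * s n i) + 1 = len π := by
  obtain ⟨h, hlt⟩ := hd
  set a : Fin n := ⟨i, Nat.lt_of_succ_lt h⟩ with ha
  set b : Fin n := ⟨i + 1, h⟩ with hb
  have hab : a < b := by rw [Fin.lt_def]; exact Nat.lt_succ_self i
  set σ : Equiv.Perm (Fin n) := Equiv.swap a b with hσ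
  have hs : s n i = σ := s_apply_of_lt h
  have hσa : σ a = b := Equiv.swap_apply_left a b
  have hσb : σ b = a := Equiv.swap_apply_right a b
  have hσσ : ∀ x, σ (σ x) = x := fun x => Equiv.swap_apply_self a b x
  have hmem : (a, b) ∈ Finset.univ.filter
      (fun p : Fin n × Fin n => p.1 < p.2 ∧ π p.2 < π p.1) := by
    simp only [Finset.mem_filter, Finset.mem_univ, true_and]
    exact ⟨hab, hlt⟩
  have hcard : len (π * s n i) =
      ((Finset.univ.filter (fun p : Fin n × Fin n => p.1 < p.2 ∧ π p.2 < π p.1)).erase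
        (a, b)).card := by
    rw [len, hs]
    apply Finset.card_bij (fun p _ => (σ p.1, σ p.2))
    · rintro p hp
      simp only [Finset.mem_filter, Finset.mem_univ, true_and, Equiv.Perm.mul_apply] at hp
      obtain ⟨hp1, hp2⟩ := (Finset.mem_filter.1 (show p ∈ Finset.univ.filter (fun p : Fin n × Fin n => p.1 < p.2 ∧ π (σ p.2) < π (σ p.1)) from hp)).2
      have hpne : ¬(p.1 = a ∧ p.2 = b) := by
        rintro ⟨e1, e2⟩
        rw [e1, e2, hσb, hσa] at hp2
        exact absurd hlt (not_lt.2 hp2.le)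
      rw [Finset.mem_erase]
      constructor
      · intro e
        have e1 : σ p.1 = a := congrArg Prod.fst e
        have e2 : σ p.2 = b := congrArg Prod.snd e
        have : p.1 = b := by rw [← hσa, ← e1, hσσ]
        have : p.2 = a := by rw [← hσb, ← e2, hσσ]
        have hba : p.2 < p.1 := by
          rw [‹p.1 = b›, ‹p.2 = a›]; exact hab
        exact absurd hp1 (not_lt.2 hba.le)
      · simp only [Finset.mem_filter, Finset.mem_univ, true_and]
        exact ⟨swap_lt h hp1 hpne, hp2⟩
    · intro p hp q hq e
      have e1 : σ p.1 = σ q.1 := congrArg Prod.fst e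
      have e2 : σ p.2 = σ q.2 := congrArg Prod.snd e
      exact Prod.ext (σ.injective e1) (σ.injective e2)
    · intro q hq
      rw [Finset.mem_erase] at hq
      obtain ⟨hqne, hq⟩ := hq
      simp only [Finset.mem_filter, Finset.mem_univ, true_and] at hq
      obtain ⟨hq1, hq2⟩ := hq
      refine ⟨(σ q.1, σ q.2), ?_, ?_⟩
      · simp only [Finset.mem_filter, Finset.mem_univ, true_and, Equiv.Perm.mul_apply]
        refine Finset.mem_filter.2 ⟨Finset.mem_univ _, ?_⟩
        constructor
        · apply swap_lt h hq1
          rintro ⟨e1, e2⟩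
          exact hqne (Prod.ext e1 e2)
        · rw [hσσ, hσσ]; exact hq2
      · exact Prod.ext (hσσ q.1) (hσσ q.2)
  rw [hcard, Finset.card_erase_of_mem hmem, len]
  have : 0 < (Finset.univ.filter
      (fun p : Fin n × Fin n => p.1 < p.2 ∧ π p.2 < π p.1)).card :=
    Finset.card_pos.2 ⟨(a, b), hmem⟩
  omega


lemma dcEquiv_base (π : Equiv.Perm (Fin n)) :
    DCEquiv (π, 1, compl π) ((1 : Equiv.Perm (Fin n)), 1, w0 n) := by
  generalize hl : len π = k
  induction k using Nat.strong_induction_on generalizing π with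
  | _ k ih =>
    rcases Nat.eq_zero_or_pos k with rfl | hk
    · rw [eq_one_of_len_eq_zero hl, compl_one]
      exact Relation.ReflTransGen.refl
    · have hne : π ≠ 1 := fun e => by rw [e, len_one] at hl; omega
      obtain ⟨i, hd⟩ := exists_descent hne
      obtain ⟨h, hlt⟩ := hd
      have hlen := len_mul_s_of_descent (π := π) (i := i) ⟨h, hlt⟩
      have hss : π * s n i * s n i = π := by
        rw [mul_assoc, s_apply_of_lt h, Equiv.swap_mul_self, mul_one]
      have hmove : DCMove (π, 1, compl π) (π * s n i, 1, compl (π * s n i)) := by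
        refine ⟨π * s n i, 1, compl π, i, ?_, ?_, ?_, ?_, ?_, ?_⟩
        · have h1 := len_add_len_compl π
          have h2 := len_le π
          rw [len_one]
          omega
        · refine ⟨h, ?_⟩
          have e1 : (π * s n i) ⟨i, Nat.lt_of_succ_lt h⟩ = π ⟨i + 1, h⟩ := by
            rw [Equiv.Perm.mul_apply, s_apply_of_lt h, Equiv.swap_apply_left]
          have e2 : (π * s n i) ⟨i + 1, h⟩ = π ⟨i, Nat.lt_of_succ_lt h⟩ := by
            rw [Equiv.Perm.mul_apply, s_apply_of_lt h, Equiv.swap_apply_right]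
          rw [e1, e2]
          exact hlt
        · exact ⟨h, by rw [Equiv.Perm.one_apply, Equiv.Perm.one_apply]; exact Fin.mk_lt_mk.2 (Nat.lt_succ_self i)⟩
        · refine ⟨h, ?_⟩
          show Fin.rev (π ⟨i, Nat.lt_of_succ_lt h⟩) < Fin.rev (π ⟨i + 1, h⟩)
          rw [Fin.rev_lt_rev]
          exact hlt
        · simp only [MoveSet, Set.mem_insert_iff, Set.mem_singleton_iff]
          left
          rw [hss]
        · simp only [MoveSet, Set.mem_insert_iff, Set.mem_singleton_iff]
          right; right
          rw [compl, compl, mul_assoc]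
      exact Relation.ReflTransGen.head hmove
        (ih (len (π * s n i)) (by omega) _ rfl)

end DC

/-- For any admissible functional f and any permutation π, f(π, id, π̄) = 1
where π̄ = w₀∘π is the complement of π. -/
theorem statement2 {n : ℕ} (hn : 1 ≤ n) (f : DC.Triple n → ℤ) (hf : DC.Admissible f)
    (π : Equiv.Perm (Fin n)) :
    f (π, 1, DC.compl π) = 1 := by
  have h1 : DC.IsSchubert (π, 1, DC.compl π) := by
    show DC.len π + DC.len 1 + DC.len (DC.compl π) = n.choose 2
    rw [DC.len_one]
    have := DC.len_add_len_compl π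
    omega
  have h2 : DC.IsSchubert ((1 : Equiv.Perm (Fin n)), 1, DC.w0 n) := by
    show DC.len 1 + DC.len 1 + DC.len (DC.w0 n) = n.choose 2
    rw [DC.len_one, DC.len_w0]
    omega
  rw [hf.1 _ _ h1 h2 (DC.dcEquiv_base π)]
  exact hf.2.2
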